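/- Let N, n ∈ ℕ with N·log₂ n ≥ e^2000, and let a ≠ b be naturals with a, b ≤ n^N. Then the number of primes p with N·log₂ n < p ≤ (N·log₂ n)² such that a ≡ b (mod p) is at most (N·log₂ n)/log₂(N·log₂ n). -/

import Mathlib

/-!
Every prime in the set divides the nonzero number `|a - b| ≤ n ^ N = 2 ^ L`, where
`L = N log₂ n`, and each exceeds `L`; so if there are `k` of them, `L ^ k ≤ 2 ^ L`, and taking
`log₂` gives `k ≤ L / log₂ L`.
-/

open Real

lemma Nat.mem_primeFactors_natAbs_sub_of_modEq {a b p : ℕ} (hab : a ≠ b) (hp : p.Prime)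
    (h : a ≡ b [MOD p]) : p ∈ ((a : ℤ) - b).natAbs.primeFactors := by
  have hdvd : (p : ℤ) ∣ (a : ℤ) - b := (dvd_sub_comm).1 (Nat.modEq_iff_dvd.1 h)
  exact Nat.mem_primeFactors.2 ⟨hp, Int.natCast_dvd.1 hdvd, by omega⟩

lemma pow_ncard_le_of_subset_primeFactors {s : Set ℕ} {d : ℕ} {x : ℝ} (hd : d ≠ 0) (hx : 0 ≤ x)
    (hs : s ⊆ d.primeFactors) (hxs : ∀ p ∈ s, x ≤ p) : x ^ s.ncard ≤ d := by
  obtain ⟨t, rfl⟩ := (d.primeFactors.finite_toSet.subset hs).exists_finset_coe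
  have hprod_le : ∏ p ∈ t, p ≤ d :=
    Nat.le_of_dvd (Nat.pos_of_ne_zero hd)
      ((Finset.prod_dvd_prod_of_subset _ _ _ (Finset.coe_subset.1 hs)).trans
        (Nat.prod_primeFactors_dvd d))
  calc x ^ (t : Set ℕ).ncard = ∏ _p ∈ t, x := by rw [Set.ncard_coe_finset, Finset.prod_const]
    _ ≤ ∏ p ∈ t, (p : ℝ) := Finset.prod_le_prod (fun _ _ => hx) hxs
    _ ≤ d := by rw [← Nat.cast_prod]; exact_mod_cast hprod_le

lemma le_div_logb_of_pow_le_rpow {b x y : ℝ} {k : ℕ} (hb : 1 < b) (hx : 1 < x)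
    (h : x ^ k ≤ b ^ y) : (k : ℝ) ≤ y / logb b x := by
  have hlog := logb_le_logb_of_le hb (by positivity) h
  rw [logb_pow, logb_rpow (by linarith) hb.ne'] at hlog
  rwa [le_div_iff₀ (logb_pos hb hx)]

lemma pow_eq_rpow_mul_logb {b x : ℝ} (hb : 0 < b) (hb1 : b ≠ 1) (hx : 0 < x) (N : ℕ) :
    x ^ N = b ^ (N * logb b x) := by
  rw [mul_comm, rpow_mul hb.le, rpow_logb hb hb1 hx, rpow_natCast]

theorem stmt_10 (N n : ℕ) (hL : Real.exp 2000 ≤ (N : ℝ) * Real.logb 2 n)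
    (a b : ℕ) (ha : a ≤ n ^ N) (hb : b ≤ n ^ N) (hab : a ≠ b) :
    ({p : ℕ | Nat.Prime p ∧ (N : ℝ) * Real.logb 2 n < (p : ℝ) ∧
        (p : ℝ) ≤ ((N : ℝ) * Real.logb 2 n) ^ 2 ∧ a ≡ b [MOD p]}.ncard : ℝ) ≤
      ((N : ℝ) * Real.logb 2 n) / Real.logb 2 ((N : ℝ) * Real.logb 2 n) := by
  set L : ℝ := (N : ℝ) * logb 2 n
  have hL1 : 1 < L := (one_lt_exp_iff.2 (by norm_num)).trans_le hL
  have hn : 0 < n := Nat.pos_of_ne_zero (by rintro rfl; norm_num [L] at hL1)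
  set d := ((a : ℤ) - b).natAbs
  have hd_le : (d : ℝ) ≤ 2 ^ L := by
    rw [← pow_eq_rpow_mul_logb two_pos (by norm_num) (by exact_mod_cast hn)]
    exact_mod_cast (by omega : d ≤ n ^ N)
  apply le_div_logb_of_pow_le_rpow one_lt_two hL1
  calc L ^ _ ≤ d := pow_ncard_le_of_subset_primeFactors (by omega) (by linarith)
        (fun p hp => Nat.mem_primeFactors_natAbs_sub_of_modEq hab hp.1 hp.2.2.2)
        (fun p hp => hp.2.1.le)
    _ ≤ 2 ^ L := hd_le
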